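/- arXiv:2003.02111 — 2 statements merged into one kernel-verified Lean document; each statement's English description precedes it below -/
import Mathlib

section
/- Under the uniform Laplacian approximation assumption, for every smooth f there is a constant C(f) such that for all N, sup_{1≤i≤N} ∑_j c^N(i,j)(f(p_j)-f(p_i))² ≤ C(f). Specifically one may take C(f) = ‖Δ_M(f²)‖_∞ + 2‖f‖_∞‖Δ_M f‖_∞ + sup_N h_f(N) where h_f(N) → 0. -/
open MeasureTheory Filter

/-- Under the uniform Laplacian approximation assumption, for a smooth `f`
(with `f² = f·f` also smooth) the quantities
`∑_j c^N(i,j)(f(p_j)-f(p_i))²` are bounded uniformly in `N` and `i`. -/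
theorem carre_du_champ_uniform_bound {M : Type*} [TopologicalSpace M]
    [CompactSpace M]
    (S : Set C(M, ℝ)) (Δ : C(M, ℝ) → C(M, ℝ))
    (p : (N : ℕ) → Fin N → M)
    (c : (N : ℕ) → Fin N → Fin N → ℝ)
    (hsym : ∀ N i j, c N i j = c N j i) (hnonneg : ∀ N i j, 0 ≤ c N i j)
    (happrox : ∀ g ∈ S, ∃ E : ℕ → ℝ, Tendsto E atTop (nhds 0) ∧
      ∀ N (i : Fin N),
        |(∑ j, c N i j * (g (p N j) - g (p N i))) - Δ g (p N i)| ≤ E N)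
    (f : C(M, ℝ)) (hf : f ∈ S) (hf2 : f * f ∈ S) :
    ∃ C : ℝ, ∀ N (i : Fin N),
      ∑ j, c N i j * (f (p N j) - f (p N i))^2 ≤ C := by
  obtain ⟨E1, hE1t, hE1⟩ := happrox f hf
  obtain ⟨E2, hE2t, hE2⟩ := happrox (f * f) hf2
  obtain ⟨B1, hB1⟩ := hE1t.bddAbove_range
  obtain ⟨B2, hB2⟩ := hE2t.bddAbove_range
  have hB1' : ∀ N, E1 N ≤ B1 := fun N => hB1 ⟨N, rfl⟩
  have hB2' : ∀ N, E2 N ≤ B2 := fun N => hB2 ⟨N, rfl⟩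
  refine ⟨‖Δ (f * f)‖ + B2 + 2 * ‖f‖ * (‖Δ f‖ + B1), fun N i => ?_⟩
  have key : ∑ j, c N i j * (f (p N j) - f (p N i))^2
      = (∑ j, c N i j * ((f * f) (p N j) - (f * f) (p N i)))
        - 2 * f (p N i) * (∑ j, c N i j * (f (p N j) - f (p N i))) := by
    rw [Finset.mul_sum, ← Finset.sum_sub_distrib]
    refine Finset.sum_congr rfl fun j _ => ?_
    simp only [ContinuousMap.mul_apply]
    ring
  rw [key]
  have hA : |∑ j, c N i j * ((f * f) (p N j) - (f * f) (p N i))|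
      ≤ ‖Δ (f * f)‖ + B2 := by
    have := hE2 N i
    have h1 : |∑ j, c N i j * ((f * f) (p N j) - (f * f) (p N i))|
        ≤ |(∑ j, c N i j * ((f * f) (p N j) - (f * f) (p N i))) - Δ (f * f) (p N i)|
          + |Δ (f * f) (p N i)| := by
      have := abs_add_le ((∑ j, c N i j * ((f * f) (p N j) - (f * f) (p N i))) - Δ (f * f) (p N i))
        (Δ (f * f) (p N i))
      simpa using this
    have h2 : |Δ (f * f) (p N i)| ≤ ‖Δ (f * f)‖ := by
      simpa using (Δ (f * f)).norm_coe_le_norm (p N i)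
    linarith [hB2' N]
  have hBnd : |∑ j, c N i j * (f (p N j) - f (p N i))| ≤ ‖Δ f‖ + B1 := by
    have := hE1 N i
    have h1 : |∑ j, c N i j * (f (p N j) - f (p N i))|
        ≤ |(∑ j, c N i j * (f (p N j) - f (p N i))) - Δ f (p N i)|
          + |Δ f (p N i)| := by
      have := abs_add_le ((∑ j, c N i j * (f (p N j) - f (p N i))) - Δ f (p N i)) (Δ f (p N i))
      simpa using this
    have h2 : |Δ f (p N i)| ≤ ‖Δ f‖ := by
      simpa using (Δ f).norm_coe_le_norm (p N i)
    linarith [hB1' N]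
  have hfbd : |f (p N i)| ≤ ‖f‖ := by simpa using f.norm_coe_le_norm (p N i)
  have habs : |2 * f (p N i) * (∑ j, c N i j * (f (p N j) - f (p N i)))|
      ≤ 2 * ‖f‖ * (‖Δ f‖ + B1) := by
    rw [abs_mul, abs_mul, abs_two]
    have h0 : (0:ℝ) ≤ ‖Δ f‖ + B1 :=
      le_trans (abs_nonneg _) hBnd
    gcongr
  calc _ ≤ |∑ j, c N i j * ((f * f) (p N j) - (f * f) (p N i))|
        + |2 * f (p N i) * (∑ j, c N i j * (f (p N j) - f (p N i)))| := by
        exact le_trans (le_abs_self _) (abs_sub _ _)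
    _ ≤ _ := by linarith
end

section
/- Let η be i.i.d. Bernoulli(ρ) on Fin N, c symmetric nonnegative weights, f: Fin N → ℝ. Define Γ = (1/(2N))∑_{i,j} c(i,j)(η(j)-η(i))²(f(j)-f(i))². Then Var(Γ) ≤ (1/N²)∑_{i,j} c(i,j)(f(j)-f(i))² · ∑_l c(i,l)(f(l)-f(i))². In particular, if sup_i ∑_j c(i,j)(f(j)-f(i))² ≤ C and (1/N)∑_{i,j} c(i,j)(f(j)-f(i))² ≤ C', then Var(Γ) ≤ CC'/N. -/
open MeasureTheory ProbabilityTheory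

/-- Variance bound for the carré du champ
`Γ = (1/(2N)) ∑ c(i,j)(η(j)-η(i))²(f(j)-f(i))²` of i.i.d. Bernoulli(ρ)
variables, and the resulting `CC'/N` bound. -/
theorem variance_carre_du_champ_bound {Ω : Type*} [MeasureSpace Ω]
    [IsProbabilityMeasure (ℙ : Measure Ω)]
    (N : ℕ) (hN : 0 < N) (ρ : ℝ) (hρ : ρ ∈ Set.Ioo (0:ℝ) 1)
    (c : Fin N → Fin N → ℝ)
    (hsym : ∀ i j, c i j = c j i) (hnonneg : ∀ i j, 0 ≤ c i j)
    (η : Fin N → Ω → ℝ)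
    (hmeas : ∀ i, Measurable (η i))
    (hind : iIndepFun η ℙ)
    (hval : ∀ i ω, η i ω = 0 ∨ η i ω = 1)
    (hmean : ∀ i, ∫ ω, η i ω = ρ)
    (f : Fin N → ℝ) :
    Var[fun ω => (1 / (2 * (N:ℝ))) * ∑ i, ∑ j,
          c i j * (η j ω - η i ω)^2 * (f j - f i)^2]
      ≤ (1 / (N:ℝ)^2) * ∑ i, ∑ j,
          c i j * (f j - f i)^2 * ∑ l, c i l * (f l - f i)^2
    ∧ ∀ C C' : ℝ,
        (∀ i, ∑ j, c i j * (f j - f i)^2 ≤ C) →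
        (1 / (N:ℝ)) * (∑ i, ∑ j, c i j * (f j - f i)^2) ≤ C' →
        Var[fun ω => (1 / (2 * (N:ℝ))) * ∑ i, ∑ j,
              c i j * (η j ω - η i ω)^2 * (f j - f i)^2]
          ≤ C * C' / (N:ℝ) := by
  classical
  set w : Fin N → Fin N → ℝ := fun i j => c i j * (f j - f i)^2 with hwdef
  set X : Fin N → Fin N → Ω → ℝ := fun i j ω => (η j ω - η i ω)^2 with hXdef
  have hwnn : ∀ i j, 0 ≤ w i j := fun i j => mul_nonneg (hnonneg i j) (sq_nonneg _)
  have hwsym : ∀ i j, w i j = w j i := by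
    intro i j; simp only [hwdef, hsym i j]; ring
  set R : Fin N → ℝ := fun i => ∑ j, w i j with hRdef
  have hRnn : ∀ i, 0 ≤ R i := fun i => Finset.sum_nonneg fun j _ => hwnn i j
  have hX01 : ∀ i j ω, X i j ω ∈ Set.Icc (0:ℝ) 1 := by
    intro i j ω
    rcases hval i ω with h1 | h1 <;> rcases hval j ω with h2 | h2 <;>
      simp [hXdef, h1, h2]
  have hXmeas : ∀ i j, Measurable (X i j) := fun i j =>
    ((hmeas j).sub (hmeas i)).pow_const 2
  have hXmem : ∀ i j, MemLp (X i j) 2 ℙ := fun i j =>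
    memLp_of_bounded (ae_of_all _ fun ω => hX01 i j ω)
      (hXmeas i j).aestronglyMeasurable 2
  have hXint : ∀ i j, Integrable (X i j) := fun i j =>
    (hXmem i j).integrable one_le_two
  set μp : Fin N → Fin N → ℝ := fun i j => ∫ ω, X i j ω with hμdef
  have hμ01 : ∀ i j, μp i j ∈ Set.Icc (0:ℝ) 1 := by
    intro i j
    constructor
    · exact integral_nonneg fun ω => (hX01 i j ω).1
    · calc μp i j ≤ ∫ _ω, (1:ℝ) :=
            integral_mono (hXint i j) (integrable_const 1) fun ω => (hX01 i j ω).2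
        _ = 1 := by simp
  set Y : Fin N → Fin N → Ω → ℝ := fun i j ω => X i j ω - μp i j with hYdef
  have hYabs : ∀ i j ω, |Y i j ω| ≤ 1 := by
    intro i j ω
    have h1 := hX01 i j ω; have h2 := hμ01 i j
    rw [abs_le]
    constructor <;> simp only [hYdef] <;> [linarith [h1.1, h2.2]; linarith [h1.2, h2.1]]
  have hYmeas : ∀ i j, Measurable (Y i j) := fun i j =>
    (hXmeas i j).sub measurable_const
  have hYint : ∀ i j, Integrable (Y i j) := fun i j =>
    (hXint i j).sub (integrable_const _)
  have hYzero : ∀ i j, ∫ ω, Y i j ω = 0 := by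
    intro i j
    simp only [hYdef]
    rw [integral_sub (hXint i j) (integrable_const _)]
    simp [hμdef]
  have hYYint : ∀ i j k l, Integrable (fun ω => Y i j ω * Y k l ω) := by
    intro i j k l
    exact (hYint k l).bdd_mul (c := 1) (hYmeas i j).aestronglyMeasurable (ae_of_all _ fun ω => by
      simpa using hYabs i j ω)
  -- covariance zero for disjoint pairs
  have hcov0 : ∀ i j k l : Fin N, i ≠ k → i ≠ l → j ≠ k → j ≠ l →
      ∫ ω, Y i j ω * Y k l ω = 0 := by
    intro i j k l hik hil hjk hjl
    have hXind : IndepFun (X i j) (X k l) ℙ := by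
      have h := hind.indepFun_prodMk_prodMk hmeas j i l k hjl hjk hil hik
      have hg : Measurable (fun p : ℝ × ℝ => (p.1 - p.2)^2) :=
        (measurable_fst.sub measurable_snd).pow_const 2
      exact h.comp hg hg
    have hYind : IndepFun (Y i j) (Y k l) ℙ :=
      hXind.comp (measurable_id.sub measurable_const)
        (measurable_id.sub measurable_const)
    have h := hYind.integral_fun_mul_eq_mul_integral (hYint i j).aestronglyMeasurable (hYint k l).aestronglyMeasurable
    simpa [hYzero] using h
  -- covariance bounded by 1
  have hcovle : ∀ i j k l : Fin N, ∫ ω, Y i j ω * Y k l ω ≤ 1 := by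
    intro i j k l
    calc ∫ ω, Y i j ω * Y k l ω ≤ ∫ _ω, (1:ℝ) := by
          refine integral_mono (hYYint i j k l) (integrable_const 1) fun ω => ?_
          calc Y i j ω * Y k l ω ≤ |Y i j ω * Y k l ω| := le_abs_self _
            _ = |Y i j ω| * |Y k l ω| := abs_mul _ _
            _ ≤ 1 * 1 :=
                mul_le_mul (hYabs i j ω) (hYabs k l ω) (abs_nonneg _) zero_le_one
            _ = 1 := one_mul 1
      _ = 1 := by simp
  -- the Kronecker-delta bound
  set dd : Fin N → Fin N → Fin N → Fin N → ℝ := fun i j k l =>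
    (if i = k then 1 else 0) + (if i = l then 1 else 0) +
    (if j = k then 1 else 0) + (if j = l then 1 else 0) with hdddef
  have hite : ∀ (P : Prop) [Decidable P], (0:ℝ) ≤ if P then 1 else 0 := by
    intro P _; split <;> norm_num
  have hddnn : ∀ i j k l, 0 ≤ dd i j k l := by
    intro i j k l
    exact add_nonneg (add_nonneg (add_nonneg (hite _) (hite _)) (hite _)) (hite _)
  have hddone : ∀ i j k l : Fin N, (i = k ∨ i = l ∨ j = k ∨ j = l) →
      (1:ℝ) ≤ dd i j k l := by
    intro i j k l h
    have n1 := hite (i = k); have n2 := hite (i = l)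
    have n3 := hite (j = k); have n4 := hite (j = l)
    simp only [hdddef]
    rcases h with h | h | h | h <;> rw [if_pos h] <;> linarith
  have hcovd : ∀ i j k l : Fin N, ∫ ω, Y i j ω * Y k l ω ≤ dd i j k l := by
    intro i j k l
    by_cases h : i ≠ k ∧ i ≠ l ∧ j ≠ k ∧ j ≠ l
    · rw [hcov0 i j k l h.1 h.2.1 h.2.2.1 h.2.2.2]; exact hddnn i j k l
    · have h' : i = k ∨ i = l ∨ j = k ∨ j = l := by tauto
      exact le_trans (hcovle i j k l) (hddone i j k l h')
  -- expected value of S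
  set S : Ω → ℝ := fun ω => ∑ i, ∑ j, w i j * X i j ω with hSdef
  have hSint_j : ∀ i, Integrable (fun ω => ∑ j, w i j * X i j ω) := fun i =>
    integrable_finset_sum _ fun j _ => (hXint i j).const_mul _
  have hSmem : MemLp S 2 ℙ := by
    show MemLp (fun ω => ∑ i, ∑ j, w i j * X i j ω) 2 ℙ
    refine memLp_finsetSum _ fun i _ => memLp_finsetSum _ fun j _ => ?_
    exact (hXmem i j).const_mul _
  have hES : ∫ ω, S ω = ∑ i, ∑ j, w i j * μp i j := by
    have hSe : (∫ ω, S ω) = ∫ ω, ∑ i, ∑ j, w i j * X i j ω := rfl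
    rw [hSe, integral_finset_sum _ fun i _ => hSint_j i]
    refine Finset.sum_congr rfl fun i _ => ?_
    rw [integral_finset_sum _ fun j _ => (hXint i j).const_mul _]
    exact Finset.sum_congr rfl fun j _ => integral_const_mul _ _
  have hSsub : ∀ ω, S ω - (∫ ω', S ω') =
      ∑ p : Fin N × Fin N, w p.1 p.2 * Y p.1 p.2 ω := by
    intro ω
    rw [hES, Fintype.sum_prod_type, show S ω = ∑ i, ∑ j, w i j * X i j ω from rfl,
      ← Finset.sum_sub_distrib]
    refine Finset.sum_congr rfl fun i _ => ?_
    rw [← Finset.sum_sub_distrib]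
    exact Finset.sum_congr rfl fun j _ => by simp only [hYdef]; ring
  have hVarS : Var[S] = ∑ p : Fin N × Fin N, ∑ q : Fin N × Fin N,
      (w p.1 p.2 * w q.1 q.2) * ∫ ω, Y p.1 p.2 ω * Y q.1 q.2 ω := by
    rw [variance_eq_integral hSmem.1.aemeasurable, show (fun ω => (S ω - ∫ ω', S ω') ^ 2) = ((S - fun _ => ∫ ω', S ω') ^ 2 : Ω → ℝ) from rfl]
    have hpt : ((S - fun _ => ∫ ω', S ω') ^ 2 : Ω → ℝ) =
        fun ω => ∑ p : Fin N × Fin N, ∑ q : Fin N × Fin N,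
          (w p.1 p.2 * w q.1 q.2) * (Y p.1 p.2 ω * Y q.1 q.2 ω) := by
      funext ω
      simp only [Pi.pow_apply, Pi.sub_apply]
      rw [hSsub ω, sq, Finset.sum_mul_sum]
      exact Finset.sum_congr rfl fun p _ => Finset.sum_congr rfl fun q _ => by ring
    rw [hpt]
    rw [integral_finset_sum _ fun p _ =>
      integrable_finset_sum _ fun q _ => ((hYYint _ _ _ _).const_mul _)]
    refine Finset.sum_congr rfl fun p _ => ?_
    rw [integral_finset_sum _ fun q _ => ((hYYint _ _ _ _).const_mul _)]
    exact Finset.sum_congr rfl fun q _ => integral_const_mul _ _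
  -- sum of the delta bound
  have hs1 : ∀ m : Fin N, (∑ k, ∑ l, w k l * (if m = k then (1:ℝ) else 0)) = R m := by
    intro m
    have h : ∀ k : Fin N, (∑ l, w k l * (if m = k then (1:ℝ) else 0)) =
        if m = k then R k else 0 := by
      intro k; by_cases h : m = k <;> simp [h, hRdef]
    simp only [h]
    simp [Finset.sum_ite_eq]
  have hs2 : ∀ m : Fin N, (∑ k, ∑ l, w k l * (if m = l then (1:ℝ) else 0)) = R m := by
    intro m
    rw [Finset.sum_comm]
    have h : ∀ l : Fin N, (∑ k, w k l * (if m = l then (1:ℝ) else 0)) =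
        if m = l then R l else 0 := by
      intro l; by_cases h : m = l
      · subst h
        simp only [eq_self_iff_true, if_true, mul_one, hRdef]
        exact Finset.sum_congr rfl fun k _ => hwsym k m
      · simp [h]
    simp only [h]
    simp [Finset.sum_ite_eq]
  have hd : ∀ i j : Fin N, (∑ k, ∑ l, w k l * dd i j k l) = 2 * R i + 2 * R j := by
    intro i j
    simp only [hdddef, mul_add, Finset.sum_add_distrib]
    rw [hs1 i, hs2 i, hs1 j, hs2 j]; ring
  have hA : (∑ p : Fin N × Fin N, ∑ q : Fin N × Fin N,
      (w p.1 p.2 * w q.1 q.2) * dd p.1 p.2 q.1 q.2) = 4 * ∑ i, R i * R i := by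
    rw [Fintype.sum_prod_type]
    have hinner : ∀ i j : Fin N, (∑ q : Fin N × Fin N,
        (w i j * w q.1 q.2) * dd i j q.1 q.2) = w i j * (2 * R i + 2 * R j) := by
      intro i j
      rw [Fintype.sum_prod_type, ← hd i j, Finset.mul_sum]
      refine Finset.sum_congr rfl fun k _ => ?_
      rw [Finset.mul_sum]
      exact Finset.sum_congr rfl fun l _ => by ring
    simp only [hinner]
    have e1 : (∑ i, ∑ j, w i j * R i) = ∑ i, R i * R i := by
      refine Finset.sum_congr rfl fun i _ => ?_
      rw [← Finset.sum_mul]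
    have e2 : (∑ i, ∑ j, w i j * R j) = ∑ i, R i * R i := by
      rw [Finset.sum_comm]
      refine Finset.sum_congr rfl fun j _ => ?_
      rw [← Finset.sum_mul]
      congr 1
      exact Finset.sum_congr rfl fun i _ => hwsym i j
    have hpt : ∀ i j : Fin N, w i j * (2 * R i + 2 * R j) =
        2 * (w i j * R i) + 2 * (w i j * R j) := fun i j => by ring
    simp only [hpt, Finset.sum_add_distrib, ← Finset.mul_sum]
    rw [e1, e2]; ring
  have hVarSle : Var[S] ≤ 4 * ∑ i, R i * R i := by
    rw [hVarS, ← hA]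
    refine Finset.sum_le_sum fun p _ => Finset.sum_le_sum fun q _ => ?_
    exact mul_le_mul_of_nonneg_left (hcovd _ _ _ _)
      (mul_nonneg (hwnn _ _) (hwnn _ _))
  -- rewrite the original variance
  have hNne : (N:ℝ) ≠ 0 := Nat.cast_ne_zero.mpr hN.ne'
  have hfun : (fun ω => (1 / (2 * (N:ℝ))) * ∑ i, ∑ j,
      c i j * X i j ω * (f j - f i)^2) = fun ω => (1 / (2 * (N:ℝ))) * S ω := by
    funext ω
    congr 1
    refine Finset.sum_congr rfl fun i _ => Finset.sum_congr rfl fun j _ => ?_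
    simp only [hwdef]; ring
  have hRHS : (∑ i, ∑ j, w i j * ∑ l, w i l) = ∑ i, R i * R i := by
    refine Finset.sum_congr rfl fun i _ => ?_
    rw [← Finset.sum_mul]
  have key : Var[fun ω => (1 / (2 * (N:ℝ))) * ∑ i, ∑ j,
      c i j * X i j ω * (f j - f i)^2] ≤ (1 / (N:ℝ)^2) * ∑ i, ∑ j, w i j * ∑ l, w i l := by
    rw [hfun, variance_const_mul, hRHS]
    calc (1 / (2 * (N:ℝ)))^2 * Var[S] ≤ (1 / (2 * (N:ℝ)))^2 * (4 * ∑ i, R i * R i) :=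
          mul_le_mul_of_nonneg_left hVarSle (sq_nonneg _)
      _ = (1 / (N:ℝ)^2) * ∑ i, R i * R i := by field_simp; ring
  constructor
  · exact key
  · intro C C' h1 h2
    have hCnn : 0 ≤ C := le_trans (hRnn ⟨0, hN⟩) (h1 ⟨0, hN⟩)
    have hsum : (∑ i, ∑ j, w i j) = ∑ i, R i := rfl
    refine le_trans key ?_
    rw [hRHS]
    have s1 : (∑ i, R i * R i) ≤ C * ∑ i, R i := by
      rw [Finset.mul_sum]
      exact Finset.sum_le_sum fun i _ => mul_le_mul_of_nonneg_right (h1 i) (hRnn i)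
    calc (1 / (N:ℝ)^2) * ∑ i, R i * R i
        ≤ (1 / (N:ℝ)^2) * (C * ∑ i, R i) := by
          apply mul_le_mul_of_nonneg_left s1
          positivity
      _ = (C / (N:ℝ)) * ((1 / (N:ℝ)) * ∑ i, R i) := by ring
      _ ≤ (C / (N:ℝ)) * C' := by
          apply mul_le_mul_of_nonneg_left _ (by positivity)
          rw [hsum] at h2
          exact h2
      _ = C * C' / (N:ℝ) := by ring
end
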